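/- Let a ∈ ℂ, let f_a(z) = e^z + a, and let F(t) = e^t − 1 with F^k its k-th iterate. For z ∈ ℂ, the following are equivalent: (i) z ∈ A(f_a); (ii) there exist T > 0 and n₀ ∈ ℕ such that |f_a^{n₀+k}(z)| ≥ F^k(T) for all k ∈ ℕ; (iii) for every T > 0 there exists n₀ ∈ ℕ such that |f_a^{n₀+k}(z)| ≥ F^k(T) for all k ∈ ℕ. -/

import Mathlib

open Filter Set Metric Bornology

/-- The exponential map `f_a(z) = e^z + a`. -/
noncomputable def expMap (a : ℂ) : ℂ → ℂ := fun z => Complex.exp z + a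

/-- The escaping set `I(f_a) = {z : |f_a^n(z)| → ∞}`. -/
def escapingSet (a : ℂ) : Set ℂ :=
  {z | Tendsto (fun n => ‖(expMap a)^[n] z‖) atTop atTop}

/-- The maximum modulus `M(r, f_a) = max_{|z| = r} |e^z + a|`. -/
noncomputable def maxMod (a : ℂ) (r : ℝ) : ℝ :=
  sSup ((fun z => ‖expMap a z‖) '' Metric.sphere (0 : ℂ) r)

/-- The fast escaping set `A(f_a)`. -/
def fastEscapingSet (a : ℂ) : Set ℂ :=
  {z | ∀ R > (0 : ℝ), ∃ l : ℕ, ∀ n : ℕ, (maxMod a)^[n] R ≤ ‖(expMap a)^[n + l] z‖}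

/-- The set `A_R(f_a) = {z : |f_a^n(z)| ≥ M^n(R, f_a) for all n}`. -/
def levelFastSet (a : ℂ) (R : ℝ) : Set ℂ :=
  {z | ∀ n : ℕ, (maxMod a)^[n] R ≤ ‖(expMap a)^[n] z‖}

/-- The model growth function `F(t) = e^t - 1`. -/
noncomputable def Fgrowth : ℝ → ℝ := fun t => Real.exp t - 1

/-- The cycle `{p, f_a(p), …, f_a^{m-1}(p)}`. -/
def cycleSet (a p : ℂ) (m : ℕ) : Set ℂ := {w | ∃ k < m, (expMap a)^[k] p = w}

/-- The basin of attraction of a set `C`: points whose orbits converge to `C`. -/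
def basin (a : ℂ) (C : Set ℂ) : Set ℂ :=
  {z | Tendsto (fun k => Metric.infDist ((expMap a)^[k] z) C) atTop (nhds 0)}

/-- A topological space is totally separated if any two distinct points can be
separated by a clopen set containing the first but not the second. -/
def TotallySeparatedClopen (X : Type*) [TopologicalSpace X] : Prop :=
  ∀ a b : X, a ≠ b → ∃ U : Set X, IsClopen U ∧ a ∈ U ∧ b ∉ U

/-- `z₀` is on a hair: there is an injective continuous arc through `z₀`
contained in the escaping set. -/
def OnHair (a z₀ : ℂ) : Prop :=
  ∃ γ : ℝ → ℂ, ContinuousOn γ (Set.Icc (-1) 1) ∧ Set.InjOn γ (Set.Icc (-1) 1) ∧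
    γ 0 = z₀ ∧ ∀ t ∈ Set.Icc (-1 : ℝ) 1, γ t ∈ escapingSet a

/-- `z₀` is an endpoint: it is not on a hair, and there is an arc starting at `z₀`
which lies in the escaping set except possibly at `z₀` itself. -/
def IsEndpoint (a z₀ : ℂ) : Prop :=
  ¬ OnHair a z₀ ∧ ∃ γ : ℝ → ℂ, ContinuousOn γ (Set.Icc 0 1) ∧ γ 0 = z₀ ∧
    ∀ t ∈ Set.Icc (0 : ℝ) 1, 0 < t → γ t ∈ escapingSet a

/-- The set `E(f_a)` of endpoints. -/
def endpoints (a : ℂ) : Set ℂ := {z | IsEndpoint a z}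

/-- `E` separates the set `X` from `∞`: in the subspace `(ℂ \ E) ∪ X ∪ {∞}` of the
one-point compactification, there is a clopen set containing `X` but not `∞`. -/
def SeparatesFromInfty (E X : Set ℂ) : Prop :=
  ∃ U : Set ↥(((fun z : ℂ => (z : OnePoint ℂ)) '' (Eᶜ ∪ X)) ∪ {OnePoint.infty}),
    IsClopen U ∧
    (∀ x : ↥(((fun z : ℂ => (z : OnePoint ℂ)) '' (Eᶜ ∪ X)) ∪ {OnePoint.infty}),
      (x : OnePoint ℂ) ∈ (fun z : ℂ => (z : OnePoint ℂ)) '' X → x ∈ U) ∧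
    (∀ x : ↥(((fun z : ℂ => (z : OnePoint ℂ)) '' (Eᶜ ∪ X)) ∪ {OnePoint.infty}),
      (x : OnePoint ℂ) = OnePoint.infty → x ∉ U)

/-- There is an exhausting sequence of bounded simply connected domains whose
boundaries lie in `E`. -/
def SpiderWebSeq (E : Set ℂ) : Prop :=
  ∃ G : ℕ → Set ℂ,
    (∀ n, IsOpen (G n) ∧ IsConnected (G n) ∧ IsBounded (G n) ∧ SimplyConnectedSpace (G n)) ∧
    (∀ n, G n ⊆ G (n + 1)) ∧ (∀ n, frontier (G n) ⊆ E) ∧ (⋃ n, G n) = Set.univ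

/-- `E` is a spider's web: `E` is connected and admits an exhausting sequence of
bounded simply connected domains with boundaries in `E`. -/
def IsSpidersWeb (E : Set ℂ) : Prop := IsConnected E ∧ SpiderWebSeq E

/-! `M(r, f_a)` and `F(t)` are both `e^r` up to an additive error of size `‖a‖ + 1`. Since an
exponential absorbs a bounded additive error after one step once its argument is large, the
iterates of one map, started a bounded distance ahead, stay ahead of the iterates of the other:
`F^k(t) + 1 ≤ M^k(t + 1)` for `t ≥ ‖a‖`, and `M^k(ρ) + ‖a‖ + 1 ≤ F^k(t)` for `t` large compared
with `ρ` and `‖a‖`. As `F^k(T) → ∞` for `T > 0`, a shift of the time `n₀` turns either comparison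
into the required one. -/

theorem iterate_rel_iterate_of_rel {α β : Type*} {f : α → α} {g : β → β} {r : α → β → Prop}
    (h : ∀ x y, r x y → r (f x) (g y)) {x : α} {y : β} (hxy : r x y) (n : ℕ) :
    r (f^[n] x) (g^[n] y) := by
  induction n with
  | zero => exact hxy
  | succ n ih => simpa only [Function.iterate_succ_apply'] using h _ _ ih

theorem Fgrowth_apply (t : ℝ) : Fgrowth t = Real.exp t - 1 := rfl

theorem self_le_Fgrowth (t : ℝ) : t ≤ Fgrowth t := by
  linarith [Real.add_one_le_exp t, Fgrowth_apply t]

theorem monotone_Fgrowth : Monotone Fgrowth := fun _ _ h =>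
  sub_le_sub_right (Real.exp_le_exp.2 h) 1

theorem add_sq_div_two_le_Fgrowth {t : ℝ} (ht : 0 ≤ t) : t + t ^ 2 / 2 ≤ Fgrowth t := by
  linarith [Real.quadratic_le_exp_of_nonneg ht, Fgrowth_apply t]

theorem add_mul_le_Fgrowth_iterate {T : ℝ} (hT : 0 ≤ T) (n : ℕ) :
    T + n * (T ^ 2 / 2) ≤ Fgrowth^[n] T := by
  induction n with
  | zero => simp
  | succ n ih =>
    have hTt : T ≤ Fgrowth^[n] T := (le_add_of_nonneg_right (by positivity)).trans ih
    have hsq : T ^ 2 ≤ (Fgrowth^[n] T) ^ 2 := pow_le_pow_left₀ hT hTt 2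
    rw [Function.iterate_succ_apply']
    push_cast
    linarith [add_sq_div_two_le_Fgrowth (hT.trans hTt)]

theorem tendsto_Fgrowth_iterate_atTop {T : ℝ} (hT : 0 < T) :
    Tendsto (fun n : ℕ => Fgrowth^[n] T) atTop atTop := by
  refine tendsto_atTop_mono (add_mul_le_Fgrowth_iterate hT.le) ?_
  refine tendsto_atTop_add_const_left _ T (Tendsto.atTop_mul_const (by positivity) ?_)
  exact tendsto_natCast_atTop_atTop

theorem norm_expMap_le (a : ℂ) {r : ℝ} {z : ℂ} (hz : z ∈ sphere (0 : ℂ) r) :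
    ‖expMap a z‖ ≤ Real.exp r + ‖a‖ :=
  calc ‖expMap a z‖ ≤ ‖Complex.exp z‖ + ‖a‖ := norm_add_le _ _
    _ ≤ Real.exp r + ‖a‖ := by
      rw [Complex.norm_exp, ← mem_sphere_zero_iff_norm.1 hz]
      gcongr
      exact Complex.re_le_norm z

theorem maxMod_le (a : ℂ) (r : ℝ) : maxMod a r ≤ Real.exp r + ‖a‖ :=
  Real.sSup_le (forall_mem_image.2 fun _ hz => norm_expMap_le a hz) (by positivity)

theorem exp_sub_norm_le_maxMod (a : ℂ) {r : ℝ} (hr : 0 ≤ r) :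
    Real.exp r - ‖a‖ ≤ maxMod a r := by
  have hr_mem : (r : ℂ) ∈ sphere (0 : ℂ) r := by simp [abs_of_nonneg hr]
  calc Real.exp r - ‖a‖ ≤ ‖expMap a r‖ := by
        simpa [expMap] using norm_sub_norm_le (Complex.exp r) (-a)
    _ ≤ maxMod a r :=
      le_csSup ⟨_, forall_mem_image.2 fun _ hz => norm_expMap_le a hz⟩ ⟨r, hr_mem, rfl⟩

theorem Fgrowth_add_one_le_maxMod (a : ℂ) {t r : ℝ} (ht : ‖a‖ ≤ t) (hr : t + 1 ≤ r) :
    Fgrowth t + 1 ≤ maxMod a r := by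
  have h_e : 2 ≤ Real.exp 1 := by linarith [Real.add_one_le_exp 1]
  have h_exp : 2 * Real.exp t ≤ Real.exp r :=
    calc 2 * Real.exp t ≤ Real.exp 1 * Real.exp t := by gcongr
      _ = Real.exp (t + 1) := by rw [Real.exp_add, mul_comm]
      _ ≤ Real.exp r := Real.exp_le_exp.2 hr
  have h_M := exp_sub_norm_le_maxMod a (r := r) (by linarith [norm_nonneg a])
  linarith [Real.add_one_le_exp t, Fgrowth_apply t]

theorem Fgrowth_iterate_add_one_le_maxMod_iterate (a : ℂ) {t : ℝ} (ht : ‖a‖ ≤ t) (n : ℕ) :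
    Fgrowth^[n] t + 1 ≤ (maxMod a)^[n] (t + 1) :=
  (iterate_rel_iterate_of_rel (r := fun t r => ‖a‖ ≤ t ∧ t + 1 ≤ r)
    (fun _ _ h => ⟨h.1.trans (self_le_Fgrowth _), Fgrowth_add_one_le_maxMod a h.1 h.2⟩)
    ⟨ht, le_rfl⟩ n).2

theorem maxMod_add_le_Fgrowth (a : ℂ) {ρ t : ℝ} (hρ : ρ + (‖a‖ + 1) ≤ t)
    (ht : 4 * (‖a‖ + 1) ≤ t) : maxMod a ρ + (‖a‖ + 1) ≤ Fgrowth t := by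
  set s := ‖a‖ + 1
  -- `e^s ≥ 2`, so passing from `e^t` to `e^(t - s)` frees half of `e^t` to absorb `2s`.
  have h_half : 2 * Real.exp (t - s) ≤ Real.exp t :=
    calc 2 * Real.exp (t - s) ≤ Real.exp s * Real.exp (t - s) := by
          gcongr
          linarith [Real.add_one_le_exp s, norm_nonneg a]
      _ = Real.exp t := by rw [← Real.exp_add, add_sub_cancel]
  have h_ρ : Real.exp ρ ≤ Real.exp (t - s) := Real.exp_le_exp.2 (by linarith)
  linarith [maxMod_le a ρ, Real.add_one_le_exp t, Fgrowth_apply t]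

theorem maxMod_iterate_add_le_Fgrowth_iterate (a : ℂ) {ρ t : ℝ} (hρ : ρ + (‖a‖ + 1) ≤ t)
    (ht : 4 * (‖a‖ + 1) ≤ t) (n : ℕ) :
    (maxMod a)^[n] ρ + (‖a‖ + 1) ≤ Fgrowth^[n] t :=
  (iterate_rel_iterate_of_rel (r := fun ρ t => ρ + (‖a‖ + 1) ≤ t ∧ 4 * (‖a‖ + 1) ≤ t)
    (fun _ _ h => ⟨maxMod_add_le_Fgrowth a h.1 h.2, h.2.trans (self_le_Fgrowth _)⟩)
    ⟨hρ, ht⟩ n).1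

theorem exists_Fgrowth_iterate_le_of_mem_fastEscapingSet {a z : ℂ} (hz : z ∈ fastEscapingSet a)
    {T : ℝ} (hT : 0 < T) : ∃ n₀ : ℕ, ∀ k : ℕ, Fgrowth^[k] T ≤ ‖(expMap a)^[n₀ + k] z‖ := by
  obtain ⟨l, hl⟩ := hz (max T ‖a‖ + 1) (by positivity)
  refine ⟨l, fun k => ?_⟩
  calc Fgrowth^[k] T ≤ Fgrowth^[k] (max T ‖a‖) := monotone_Fgrowth.iterate k (le_max_left _ _)
    _ ≤ (maxMod a)^[k] (max T ‖a‖ + 1) := by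
      linarith [Fgrowth_iterate_add_one_le_maxMod_iterate a (le_max_right T ‖a‖) k]
    _ ≤ ‖(expMap a)^[l + k] z‖ := Nat.add_comm k l ▸ hl k

theorem mem_fastEscapingSet_of_Fgrowth_iterate_le {a z : ℂ} {T : ℝ} (hT : 0 < T) {n₀ : ℕ}
    (h : ∀ k : ℕ, Fgrowth^[k] T ≤ ‖(expMap a)^[n₀ + k] z‖) : z ∈ fastEscapingSet a := by
  intro R _
  obtain ⟨j, hj⟩ :=
    ((tendsto_Fgrowth_iterate_atTop hT).eventually_ge_atTop (R + 4 * (‖a‖ + 1))).exists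
  refine ⟨n₀ + j, fun n => ?_⟩
  calc (maxMod a)^[n] R ≤ Fgrowth^[n] (Fgrowth^[j] T) := by
        have := maxMod_iterate_add_le_Fgrowth_iterate a (ρ := R) (t := Fgrowth^[j] T)
          (by linarith [norm_nonneg a]) (by linarith) n
        linarith [norm_nonneg a]
    _ = Fgrowth^[n + j] T := (Function.iterate_add_apply _ n j T).symm
    _ ≤ ‖(expMap a)^[n₀ + (n + j)] z‖ := h (n + j)
    _ = ‖(expMap a)^[n + (n₀ + j)] z‖ := by rw [Nat.add_left_comm]

/-- **Characterisation of the fast escaping set via `F(t) = e^t - 1`.** A point `z`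
is in `A(f_a)` iff there are `T > 0` and `n₀` with `|f_a^{n₀+k}(z)| ≥ F^k(T)` for all
`k`, iff for every `T > 0` there is such an `n₀`. -/
theorem fastEscaping_iff_Fgrowth (a z : ℂ) :
    (z ∈ fastEscapingSet a ↔
      ∃ T > (0 : ℝ), ∃ n₀ : ℕ, ∀ k : ℕ, Fgrowth^[k] T ≤ ‖(expMap a)^[n₀ + k] z‖) ∧
    (z ∈ fastEscapingSet a ↔
      ∀ T > (0 : ℝ), ∃ n₀ : ℕ, ∀ k : ℕ, Fgrowth^[k] T ≤ ‖(expMap a)^[n₀ + k] z‖) :=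
  ⟨⟨fun hz => ⟨1, one_pos, exists_Fgrowth_iterate_le_of_mem_fastEscapingSet hz one_pos⟩,
      fun ⟨_, hT, _, h⟩ => mem_fastEscapingSet_of_Fgrowth_iterate_le hT h⟩,
    ⟨fun hz _ hT => exists_Fgrowth_iterate_le_of_mem_fastEscapingSet hz hT,
      fun h => (h 1 one_pos).elim fun _ => mem_fastEscapingSet_of_Fgrowth_iterate_le one_pos⟩⟩
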